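/- Let H be a finite abelian group and let C ⊆ H be nonempty such that every single element c ∈ C generates H (i.e. H = ⟨c⟩ for each c ∈ C) and C ∩ (−C) = ∅. Let γ > 2 be a real number and let S ⊆ H be such that def_H(S) ≥ γ·|C|. Then there exists c ∈ C with λ_S(c) ≥ (1 − 4/γ)·|C|. -/

import Mathlib

open Finset

/-- `λ_S(c) = |(S + c) \ S|`. -/
def lam {H : Type*} [AddCommGroup H] [DecidableEq H] (S : Finset H) (c : H) : ℕ :=
  ((S.image (· + c)) \ S).card

/-- `def_H(S) = min {|S|, |H \ S|}`. -/
def deficiency {H : Type*} [AddCommGroup H] [Fintype H] [DecidableEq H] (S : Finset H) : ℕ :=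
  min S.card Sᶜ.card

/-!
Let `k = |C|`, `d = def_H(S)` and suppose `t = max_{c ∈ C} λ_S(c)` is small. The function `λ_S` is
subadditive and even, so it is at most `j t` on the `j`-fold sumset of `D = {0} ∪ C ∪ (-C)`.
Since every nonzero element of `D` generates `H`, Chowla's theorem (proved with Dyson's
e-transform) gives `|j D| ≥ min(|H|, 2 k j + 1)`. Hence the level set `{λ_S ≤ T}` has at least
`2 min(d, k ⌊T / t⌋)` elements. On the other hand `∑_h λ_S(h) = |S| |H \ S|`, which amounts to
`∑_{T < d} |{λ_S ≤ T}| = d²`. Summing the lower bound over `T < d` gives more than `d²` as soon as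
`t d + 4 k² < k d`, which is what `t < (1 - 4/γ) k` and `d ≥ γ k` provide.
-/

open Pointwise

namespace Finset

variable {H : Type*} [AddCommGroup H] [DecidableEq H]

lemma card_insert_zero_union_neg {C : Finset H} (hC : ∀ c ∈ C, -c ∉ C) :
    #(insert 0 (C ∪ -C)) = 2 * #C + 1 := by
  have h0 : (0 : H) ∉ C := fun h => hC 0 h (by simpa using h)
  have hdisj : Disjoint C (-C) := disjoint_left.2 fun c hc hc' => hC c hc (by simpa using hc')
  rw [card_insert_of_notMem (by simpa [mem_neg] using h0), card_union_of_disjoint hdisj, card_neg]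
  ring

variable [Fintype H]

lemma eq_univ_of_vadd_finset_subset {A : Finset H} {c : H}
    (hc : AddSubgroup.zmultiples c = ⊤) (hA : A.Nonempty) (h : c +ᵥ A ⊆ A) : A = univ := by
  have hstab : AddAction.stabilizer H A = ⊤ := top_le_iff.1 <| hc ▸
    AddSubgroup.zmultiples_le.2 (AddAction.mem_stabilizer_finset_iff_vadd_finset_subset.2 h)
  obtain ⟨a, ha⟩ := hA
  refine eq_univ_of_forall fun x => ?_
  have := AddAction.mem_stabilizer_finset.1 (hstab ▸ AddSubgroup.mem_top (x - a)) a
  simpa using this.2 ha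

/-- Chowla's theorem, for an arbitrary finite abelian group. -/
theorem min_le_card_add_of_forall_zmultiples_eq_top {B : Finset H} (hB0 : 0 ∈ B)
    (hB : ∀ b ∈ B, b ≠ 0 → AddSubgroup.zmultiples b = ⊤) {A : Finset H} (hA : A.Nonempty) :
    min (Fintype.card H) (#A + #B - 1) ≤ #(A + B) := by
  induction B using Finset.strongInduction generalizing A with
  | H B ih =>
  by_cases hmove : ∃ e ∈ A, ¬ B ⊆ -e +ᵥ A
  · obtain ⟨e, heA, hBe⟩ := hmove
    set A' := (addDysonETransform e (A, B)).1
    set B' := (addDysonETransform e (A, B)).2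
    have hB' : B' ⊂ B :=
      ssubset_of_subset_of_ne inter_subset_left fun h => hBe (h ▸ inter_subset_right)
    have hB'0 : 0 ∈ B' := mem_inter.2 ⟨hB0, by simpa [← neg_vadd_mem_iff] using heA⟩
    have hcard : #A' + #B' = #A + #B := addDysonETransform.card e (A, B)
    calc min (Fintype.card H) (#A + #B - 1) = min (Fintype.card H) (#A' + #B' - 1) := by
          rw [hcard]
      _ ≤ #(A' + B') :=
          ih B' hB' hB'0 (fun b hb => hB b (hB'.subset hb)) (hA.mono subset_union_left)
      _ ≤ #(A + B) := card_le_card (addDysonETransform.subset e (A, B))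
  push Not at hmove
  by_cases hgen : ∃ b ∈ B, b ≠ 0
  · obtain ⟨b, hbB, hb0⟩ := hgen
    have hAb : b +ᵥ A ⊆ A := by
      intro x hx
      obtain ⟨a, ha, rfl⟩ := mem_vadd_finset.1 hx
      simpa [← neg_vadd_mem_iff, add_comm] using hmove a ha hbB
    calc min (Fintype.card H) (#A + #B - 1) ≤ #A := by
          rw [eq_univ_of_vadd_finset_subset (hB b hbB hb0) hA hAb, card_univ]
          exact min_le_left _ _
      _ ≤ #(A + B) := card_le_card_add_right ⟨0, hB0⟩
  · push Not at hgen
    rw [eq_singleton_iff_unique_mem.2 ⟨hB0, hgen⟩]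
    simp

lemma min_le_card_nsmul {D : Finset H} (hD0 : 0 ∈ D)
    (hD : ∀ b ∈ D, b ≠ 0 → AddSubgroup.zmultiples b = ⊤) (j : ℕ) :
    min (Fintype.card H) (j * (#D - 1) + 1) ≤ #(j • D) := by
  induction j with
  | zero => simp
  | succ j ih =>
    have hnonempty : (j • D).Nonempty := Nonempty.nsmul ⟨0, hD0⟩
    have hadd := min_le_card_add_of_forall_zmultiples_eq_top hD0 hD hnonempty
    have hD : 0 < #D := card_pos.2 ⟨0, hD0⟩
    rw [succ_nsmul, add_one_mul]
    omega

end Finset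

lemma sum_range_card_filter_le {α : Type*} [Fintype α] (f : α → ℕ) (d : ℕ) :
    ∑ T ∈ range d, #{x | f x ≤ T} = ∑ x, (d - f x) := by
  simp only [card_filter]
  rw [sum_comm]
  refine sum_congr rfl fun x _ => ?_
  rw [← card_filter, ← Nat.card_Ico]
  congr 1
  ext T
  simp only [mem_filter, mem_range, mem_Ico]
  omega

lemma sum_range_mul_div (t Q : ℕ) : ∑ T ∈ range (t * Q), T / t = t * ∑ q ∈ range Q, q := by
  induction Q with
  | zero => simp
  | succ Q ih =>
    have hblock : ∀ x ∈ range t, (t * Q + x) / t = Q := fun x hx => by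
      rw [Nat.mul_add_div (pos_of_gt (mem_range.1 hx)), Nat.div_eq_of_lt (mem_range.1 hx),
        add_zero]
    rw [mul_add_one, sum_range_add, ih, sum_congr rfl hblock, sum_range_succ]
    simp only [sum_const, card_range, smul_eq_mul]
    ring

lemma sum_range_two_mul_min_div {k t d P : ℕ} (ht : 0 < t) (hdP : d ≤ k * (P + 1))
    (hPd : k * P < d) (hPt : t * (P + 1) ≤ d) :
    ∑ T ∈ range d, 2 * min d (k * (T / t)) = k * P * (t * (P + 1)) + 2 * d * (d - t * (P + 1)) := by
  have hlow : ∀ T ∈ range (t * (P + 1)), 2 * min d (k * (T / t)) = 2 * k * (T / t) :=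
    fun T hT => by
      have : T / t ≤ P := Nat.lt_succ_iff.1 <| (Nat.div_lt_iff_lt_mul ht).2 <| by
        rw [mul_comm]; exact mem_range.1 hT
      rw [min_eq_right (by nlinarith), mul_assoc]
  have hhigh : ∀ T ∈ Ico (t * (P + 1)) d, 2 * min d (k * (T / t)) = 2 * d := fun T hT => by
    have : P + 1 ≤ T / t := (Nat.le_div_iff_mul_le ht).2 <| by
      rw [mul_comm]; exact (mem_Ico.1 hT).1
    rw [min_eq_left (by nlinarith)]
  have hgauss := sum_range_id_mul_two (P + 1)
  rw [Nat.add_sub_cancel] at hgauss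
  rw [← sum_range_add_sum_Ico _ hPt, sum_congr rfl hlow, sum_congr rfl hhigh, ← mul_sum,
    sum_range_mul_div, sum_const, Nat.card_Ico, smul_eq_mul]
  calc 2 * k * (t * ∑ q ∈ range (P + 1), q) + (d - t * (P + 1)) * (2 * d)
      = k * t * ((∑ q ∈ range (P + 1), q) * 2) + (d - t * (P + 1)) * (2 * d) := by ring
    _ = _ := by rw [hgauss]; ring

lemma lt_sum_range_two_mul_min {k t d : ℕ} (ht : 0 < t) (h : t * d + 4 * k * k < k * d) :
    d * d < ∑ T ∈ range d, 2 * min d (k * (T / t)) := by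
  have hk : 0 < k := by nlinarith
  -- `P + 1 = ⌈d / k⌉`
  obtain ⟨P, hdP, hPd⟩ : ∃ P, d ≤ k * (P + 1) ∧ k * P < d := by
    have hd : 0 < d := by nlinarith
    have := Nat.lt_mul_div_succ (d - 1) hk
    have := Nat.mul_div_le (d - 1) k
    exact ⟨(d - 1) / k, by omega, by omega⟩
  set a := t * (P + 1) with ha
  have hslack : k + a < k * (P + 1) := by
    have : k * (k + a) < k * (k * (P + 1)) := by
      calc k * (k + a) = k * k + t * (k * (P + 1)) := by ring
        _ ≤ k * k + t * (d + k) := by gcongr; rw [mul_add_one]; omega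
        _ < k * d := by nlinarith
        _ ≤ k * (k * (P + 1)) := by gcongr
    exact lt_of_mul_lt_mul_left this (Nat.zero_le k)
  have had : a ≤ d := by nlinarith
  rw [sum_range_two_mul_min_div ht hdP hPd had, ← ha]
  -- the excess over `d²` is `(d - a)² + a (k P - a)`
  have : a * a < k * P * a := Nat.mul_lt_mul_of_pos_right (by rw [mul_add_one] at hslack; omega)
    (by positivity)
  obtain ⟨r, rfl⟩ : ∃ r, d = a + r := ⟨d - a, by omega⟩
  rw [Nat.add_sub_cancel_left]
  nlinarith

lemma min_mul_min_add_mul (a b : ℕ) : min a b * min a b + a * b = (a + b) * min a b := by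
  rcases le_total a b with h | h <;> simp [h] <;> ring

section lam

variable {H : Type*} [AddCommGroup H] [DecidableEq H]

lemma lam_eq_card_vadd_finset_sdiff (S : Finset H) (c : H) : lam S c = #((c +ᵥ S) \ S) := by
  simp only [lam, vadd_finset_def, vadd_eq_add, add_comm c]

@[simp] lemma lam_zero (S : Finset H) : lam S 0 = 0 := by
  simp [lam_eq_card_vadd_finset_sdiff]

lemma lam_eq_zero_iff {S : Finset H} {c : H} : lam S c = 0 ↔ c +ᵥ S ⊆ S := by
  rw [lam_eq_card_vadd_finset_sdiff, card_eq_zero, sdiff_eq_empty_iff_subset]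

lemma lam_le_card (S : Finset H) (c : H) : lam S c ≤ #S := by
  rw [lam_eq_card_vadd_finset_sdiff, ← card_vadd_finset c S]
  exact card_le_card sdiff_subset

lemma lam_neg (S : Finset H) (c : H) : lam S (-c) = lam S c := by
  rw [lam_eq_card_vadd_finset_sdiff, lam_eq_card_vadd_finset_sdiff,
    ← card_vadd_finset c, vadd_finset_sdiff, vadd_neg_vadd,
    card_sdiff_comm (card_vadd_finset c S).symm]

lemma lam_add_le (S : Finset H) (a b : H) : lam S (a + b) ≤ lam S a + lam S b := by
  simp only [lam_eq_card_vadd_finset_sdiff]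
  calc #(((a + b) +ᵥ S) \ S)
      ≤ #(((a + b) +ᵥ S) \ (b +ᵥ S) ∪ (b +ᵥ S) \ S) := card_le_card (sdiff_triangle _ _ _)
    _ ≤ #(((a + b) +ᵥ S) \ (b +ᵥ S)) + #((b +ᵥ S) \ S) := card_union_le _ _
    _ = #((a +ᵥ S) \ S) + #((b +ᵥ S) \ S) := by
      rw [add_comm a, add_vadd, ← vadd_finset_sdiff, card_vadd_finset]

lemma lam_le_of_mem_nsmul {S D : Finset H} {t : ℕ} (hD : ∀ v ∈ D, lam S v ≤ t) :
    ∀ (j : ℕ), ∀ w ∈ j • D, lam S w ≤ j * t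
  | 0, w, hw => by simp_all [mem_zero]
  | j + 1, w, hw => by
    rw [succ_nsmul] at hw
    obtain ⟨u, hu, v, hv, rfl⟩ := mem_add.1 hw
    calc lam S (u + v) ≤ lam S u + lam S v := lam_add_le S u v
      _ ≤ j * t + t := add_le_add (lam_le_of_mem_nsmul hD j u hu) (hD v hv)
      _ = (j + 1) * t := by ring

variable [Fintype H]

lemma lam_le_card_compl (S : Finset H) (c : H) : lam S c ≤ #Sᶜ := by
  rw [lam_eq_card_vadd_finset_sdiff, sdiff_eq_inter_compl]
  exact card_le_card inter_subset_right

lemma sum_lam (S : Finset H) : ∑ h, lam S h = #S * #Sᶜ := by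
  have hfiber (x : H) : #{h | -h + x ∈ S} = #S := by
    refine card_nbij' (fun h => -h + x) (fun s => x - s) ?_ ?_ ?_ ?_ <;>
      intro a ha <;> simp_all
  calc ∑ h, lam S h = ∑ h, ∑ x ∈ Sᶜ, if -h + x ∈ S then 1 else 0 := by
        refine sum_congr rfl fun h _ => ?_
        rw [sum_boole, lam_eq_card_vadd_finset_sdiff, Nat.cast_id]
        congr 1
        ext x
        simp [← neg_vadd_mem_iff, and_comm]
    _ = ∑ x ∈ Sᶜ, #{h | -h + x ∈ S} := by
        rw [sum_comm]; simp only [sum_boole, Nat.cast_id]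
    _ = #S * #Sᶜ := by simp only [hfiber, sum_const, smul_eq_mul, mul_comm]

lemma min_le_card_lam_le {C S : Finset H} (hgen : ∀ c ∈ C, AddSubgroup.zmultiples c = ⊤)
    (hdisj : ∀ c ∈ C, -c ∉ C) {t : ℕ} (hC : ∀ c ∈ C, lam S c ≤ t) (T : ℕ) :
    min (Fintype.card H) (2 * (#C * (T / t)) + 1) ≤ #{h | lam S h ≤ T} := by
  set D := insert 0 (C ∪ -C)
  have hD0 : (0 : H) ∈ D := mem_insert_self _ _
  have hDgen : ∀ b ∈ D, b ≠ 0 → AddSubgroup.zmultiples b = ⊤ := by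
    intro b hb hb0
    rcases mem_insert.1 hb with rfl | hb
    · exact absurd rfl hb0
    rcases mem_union.1 hb with hb | hb
    · exact hgen b hb
    · rw [← AddSubgroup.zmultiples_neg]
      exact hgen (-b) (mem_neg'.1 hb)
  have hDlam : ∀ b ∈ D, lam S b ≤ t := by
    intro b hb
    rcases mem_insert.1 hb with rfl | hb
    · simp
    rcases mem_union.1 hb with hb | hb
    · exact hC b hb
    · rw [← lam_neg]
      exact hC (-b) (mem_neg'.1 hb)
  have hsub : (T / t) • D ⊆ ({h | lam S h ≤ T} : Finset H) := fun w hw =>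
    mem_filter.2 ⟨mem_univ w, (lam_le_of_mem_nsmul hDlam _ w hw).trans (Nat.div_mul_le_self T t)⟩
  calc min (Fintype.card H) (2 * (#C * (T / t)) + 1)
      = min (Fintype.card H) ((T / t) * (#D - 1) + 1) := by
        rw [card_insert_zero_union_neg hdisj, Nat.add_sub_cancel]
        ring_nf
    _ ≤ #((T / t) • D) := min_le_card_nsmul hD0 hDgen _
    _ ≤ _ := card_le_card hsub

end lam

section deficiency

variable {H : Type*} [AddCommGroup H] [DecidableEq H] [Fintype H]

lemma two_mul_deficiency_le_card (S : Finset H) : 2 * deficiency S ≤ Fintype.card H := by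
  have := card_add_card_compl S
  unfold deficiency
  omega

lemma lam_le_deficiency (S : Finset H) (c : H) : lam S c ≤ deficiency S :=
  le_min (lam_le_card S c) (lam_le_card_compl S c)

lemma sum_deficiency_sub_lam (S : Finset H) :
    ∑ h, (deficiency S - lam S h) = deficiency S * deficiency S := by
  have hsum : ∑ h, (deficiency S - lam S h) + #S * #Sᶜ = Fintype.card H * deficiency S := by
    rw [← sum_lam, ← sum_add_distrib]
    simp [Nat.sub_add_cancel (lam_le_deficiency S _)]
  have hmin : deficiency S * deficiency S + #S * #Sᶜ = (#S + #Sᶜ) * deficiency S :=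
    min_mul_min_add_mul _ _
  rw [← card_add_card_compl S] at hsum
  omega

lemma deficiency_eq_zero_of_lam_eq_zero {S : Finset H} {c : H}
    (hc : AddSubgroup.zmultiples c = ⊤) (h : lam S c = 0) : deficiency S = 0 := by
  rcases S.eq_empty_or_nonempty with rfl | hS
  · simp [deficiency]
  · simp [deficiency, eq_univ_of_vadd_finset_subset hc hS (lam_eq_zero_iff.1 h)]

end deficiency

lemma mul_add_four_mul_mul_lt {γ : ℝ} (hγ : 0 < γ) {k t d : ℕ} (hk : 0 < k)
    (ht : (t : ℝ) < (1 - 4 / γ) * k) (hd : γ * k ≤ d) : t * d + 4 * k * k < k * d := by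
  have hd0 : (0 : ℝ) < d := lt_of_lt_of_le (by positivity) hd
  have : (4 : ℝ) * k * k ≤ 4 / γ * k * d := by
    rw [div_mul_eq_mul_div, div_mul_eq_mul_div, le_div_iff₀ hγ]
    nlinarith
  have : (t : ℝ) * d < (1 - 4 / γ) * k * d := mul_lt_mul_of_pos_right ht hd0
  exact_mod_cast (by linarith : (t : ℝ) * d + 4 * k * k < k * d)

theorem stmt11 {H : Type*} [AddCommGroup H] [Fintype H] [DecidableEq H]
    (C : Finset H) (hC : C.Nonempty)
    (hgen : ∀ c ∈ C, AddSubgroup.zmultiples c = ⊤)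
    (hdisj : ∀ c ∈ C, -c ∉ C)
    (γ : ℝ) (hγ : 2 < γ)
    (S : Finset H)
    (hdef : (deficiency S : ℝ) ≥ γ * (C.card : ℝ)) :
    ∃ c ∈ C, (lam S c : ℝ) ≥ (1 - 4 / γ) * (C.card : ℝ) := by
  by_contra! hsmall
  obtain ⟨c₀, hc₀, hmax⟩ := C.exists_max_image (lam S) hC
  have hγ0 : 0 < γ := by linarith
  have hd : 0 < deficiency S := by
    have : (0 : ℝ) < γ * #C := mul_pos hγ0 (by exact_mod_cast hC.card_pos)
    exact_mod_cast this.trans_le hdef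
  have ht : 0 < lam S c₀ :=
    Nat.pos_of_ne_zero fun h => hd.ne' (deficiency_eq_zero_of_lam_eq_zero (hgen c₀ hc₀) h)
  have hgap := lt_sum_range_two_mul_min ht
    (mul_add_four_mul_mul_lt hγ0 hC.card_pos (hsmall c₀ hc₀) hdef)
  refine hgap.not_ge ?_
  calc ∑ T ∈ range (deficiency S), 2 * min (deficiency S) (#C * (T / lam S c₀))
      ≤ ∑ T ∈ range (deficiency S), #{h | lam S h ≤ T} := sum_le_sum fun T _ => by
        have := min_le_card_lam_le hgen hdisj hmax T
        have := two_mul_deficiency_le_card S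
        omega
    _ = deficiency S * deficiency S := by
        rw [sum_range_card_filter_le, sum_deficiency_sub_lam]
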